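/- Let A be a rational map of the Riemann sphere of degree at least five, and let O₁ and O₂ be nontrivial orbifolds on ℂP¹ such that A : O₁ → O₂ is a minimal holomorphic map between orbifolds. Assume χ(O₁) ≥ 0. Then every singular point of O₂ is a critical value of A, i.e. c(O₂) ⊆ c(O₂^A). -/
import Mathlib


open Polynomial OnePoint
open scoped Classical

noncomputable section

namespace GenLattes

/-- Composition of rational functions: `rcomp f g = f ∘ g`. -/
def rcomp (f g : RatFunc ℂ) : RatFunc ℂ :=
  Polynomial.aeval g f.num / Polynomial.aeval g f.denom

/-- The degree of a rational function: the maximum of the degrees of its numerator and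
denominator in lowest terms. -/
def rdeg (f : RatFunc ℂ) : ℕ := max f.num.natDegree f.denom.natDegree

/-- Evaluation of a rational function at a finite point, with value in the Riemann
sphere `ℂP¹ = OnePoint ℂ`. -/
def evalF (f : RatFunc ℂ) (z : ℂ) : OnePoint ℂ :=
  if f.denom.eval z = 0 then ∞ else ((f.num.eval z / f.denom.eval z : ℂ) : OnePoint ℂ)

/-- The local degree (local multiplicity) of a rational function at a finite point. -/
def locDegF (f : RatFunc ℂ) (z : ℂ) : ℕ :=
  if f.denom.eval z = 0 then rootMultiplicity z f.denom
  else rootMultiplicity z (f.num - Polynomial.C (f.num.eval z / f.denom.eval z) * f.denom)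

/-- The rational function `f(1/X)`. -/
def flip (f : RatFunc ℂ) : RatFunc ℂ := rcomp f (RatFunc.X)⁻¹

/-- The self-map of the Riemann sphere `ℂP¹ = OnePoint ℂ` induced by a rational function. -/
def evalOP (f : RatFunc ℂ) (x : OnePoint ℂ) : OnePoint ℂ :=
  OnePoint.rec (evalF (flip f) 0) (fun z => evalF f z) x

/-- The local degree `deg_x f` of a rational function at a point of the Riemann sphere. -/
def locDeg (f : RatFunc ℂ) (x : OnePoint ℂ) : ℕ :=
  OnePoint.rec (locDegF (flip f) 0) (fun z => locDegF f z) x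

/-- The iterate `f^{∘l}` of a rational function (with `riter f 0 = X = id`). -/
def riter (f : RatFunc ℂ) : ℕ → RatFunc ℂ
  | 0 => RatFunc.X
  | l + 1 => rcomp f (riter f l)

/-- An orbifold on the Riemann sphere: a ramification function `ν : ℂP¹ → ℕ` with
`ν(z) ≥ 1` everywhere and `ν(z) = 1` outside a finite set. -/
structure Orbifold where
  nu : OnePoint ℂ → ℕ
  one_le : ∀ z, 1 ≤ nu z
  finite : {z : OnePoint ℂ | nu z ≠ 1}.Finite

/-- A good orbifold: it is forbidden to have exactly one point with `ν > 1`, or exactly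
two such points with different values of `ν`. -/
def Orbifold.Good (O : Orbifold) : Prop :=
  (¬ ∃ z, {w : OnePoint ℂ | O.nu w ≠ 1} = {z}) ∧
  (¬ ∃ z₁ z₂, z₁ ≠ z₂ ∧ {w : OnePoint ℂ | O.nu w ≠ 1} = {z₁, z₂} ∧ O.nu z₁ ≠ O.nu z₂)

/-- A nontrivial orbifold (distinct from the non-ramified sphere). -/
def Orbifold.IsNontrivial (O : Orbifold) : Prop := ∃ z, 1 < O.nu z

/-- The relation `O₁ ⪯ O₂`: pointwise divisibility of ramification functions. -/
def Orbifold.Prec (O₁ O₂ : Orbifold) : Prop := ∀ z, O₁.nu z ∣ O₂.nu z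

/-- The signature of an orbifold: the multiset of values of `ν` on `c(O) = {ν > 1}`. -/
def Orbifold.signature (O : Orbifold) : Multiset ℕ := O.finite.toFinset.val.map O.nu

/-- The Euler characteristic `χ(O) = 2 + Σ (1/ν(z) - 1)`. -/
def Orbifold.eulerChar (O : Orbifold) : ℚ :=
  2 + ∑ z ∈ O.finite.toFinset, ((O.nu z : ℚ)⁻¹ - 1)

/-- `A : O₁ → O₂` is a holomorphic map between orbifolds:
`ν₂(A(z)) ∣ ν₁(z)·deg_z A` for all `z`. -/
def IsHolo (A : RatFunc ℂ) (O₁ O₂ : Orbifold) : Prop :=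
  ∀ z, O₂.nu (evalOP A z) ∣ O₁.nu z * locDeg A z

/-- `A : O₁ → O₂` is a minimal holomorphic map between orbifolds:
`ν₂(A(z)) = ν₁(z)·gcd(deg_z A, ν₂(A(z)))` for all `z`. -/
def IsMinHolo (A : RatFunc ℂ) (O₁ O₂ : Orbifold) : Prop :=
  ∀ z, O₂.nu (evalOP A z) = O₁.nu z * Nat.gcd (locDeg A z) (O₂.nu (evalOP A z))

/-- `A : O₁ → O₂` is a covering map between orbifolds:
`ν₂(A(z)) = ν₁(z)·deg_z A` for all `z`. -/
def IsCovering (A : RatFunc ℂ) (O₁ O₂ : Orbifold) : Prop :=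
  ∀ z, O₂.nu (evalOP A z) = O₁.nu z * locDeg A z

/-- `A` and `B` are conjugate by a Möbius transformation: `A = μ ∘ B ∘ μ⁻¹`. -/
def Conjugate (A B : RatFunc ℂ) : Prop :=
  ∃ μ ν : RatFunc ℂ, rcomp μ ν = RatFunc.X ∧ rcomp ν μ = RatFunc.X ∧
    A = rcomp (rcomp μ B) ν

/-- The Chebyshev polynomial `T_d` viewed as a rational function. -/
def chebyRF (d : ℕ) : RatFunc ℂ :=
  algebraMap (Polynomial ℂ) (RatFunc ℂ) (Polynomial.Chebyshev.T ℂ d)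

end GenLattes

namespace GenLattes



private lemma coprime_eval {p q : Polynomial ℂ} (h : IsCoprime p q) (z : ℂ)
    (hp : p.eval z = 0) : q.eval z ≠ 0 := by
  obtain ⟨a, b, hab⟩ := h
  intro hq
  have := congrArg (Polynomial.eval z) hab
  simp [hp, hq] at this

private lemma algebraMap_eq_aeval (q : Polynomial ℂ) :
    algebraMap (Polynomial ℂ) (RatFunc ℂ) q = Polynomial.aeval RatFunc.X q := by
  induction q using Polynomial.induction_on' with
  | add p q hp hq => simp only [map_add, hp, hq]
  | monomial i a =>
      rw [← Polynomial.C_mul_X_pow_eq_monomial, map_mul, map_mul, map_pow, map_pow,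
        Polynomial.aeval_X, RatFunc.algebraMap_X, RatFunc.algebraMap_C, Polynomial.aeval_C]
      rfl

private lemma reflect_reflect (D : ℕ) (p : Polynomial ℂ) :
    Polynomial.reflect D (Polynomial.reflect D p) = p :=
  Polynomial.ext fun j => by
    rw [Polynomial.coeff_reflect, Polynomial.coeff_reflect, Polynomial.revAt_invol]

private lemma natDegree_reflect_le {p : Polynomial ℂ} {D : ℕ} (h : p.natDegree ≤ D) :
    (Polynomial.reflect D p).natDegree ≤ D := by
  refine Polynomial.natDegree_le_iff_coeff_eq_zero.mpr fun m hm => ?_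
  rw [Polynomial.coeff_reflect, Polynomial.revAt_eq_self_of_lt hm]
  exact Polynomial.coeff_eq_zero_of_natDegree_lt (lt_of_le_of_lt h hm)

private lemma aeval_inv_X (D : ℕ) {p : Polynomial ℂ} (hp : p.natDegree ≤ D) :
    Polynomial.aeval (RatFunc.X)⁻¹ p
      = algebraMap (Polynomial ℂ) (RatFunc ℂ) (Polynomial.reflect D p) / RatFunc.X ^ D := by
  have hX : (RatFunc.X : RatFunc ℂ) ≠ 0 := RatFunc.X_ne_zero
  letI : Invertible (RatFunc.X : RatFunc ℂ) := invertibleOfNonzero hX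
  have h := Polynomial.eval₂_reflect_mul_pow (algebraMap ℂ (RatFunc ℂ)) RatFunc.X D
      (Polynomial.reflect D p) (natDegree_reflect_le hp)
  rw [reflect_reflect, invOf_eq_inv] at h
  rw [eq_div_iff (pow_ne_zero D hX), Polynomial.aeval_def, h, algebraMap_eq_aeval,
    Polynomial.aeval_def]



private lemma rm_zero_reflect {p : Polynomial ℂ} {D : ℕ} (hp : p ≠ 0) (h : p.natDegree ≤ D) :
    Polynomial.rootMultiplicity 0 (Polynomial.reflect D p) = D - p.natDegree := by
  rw [Polynomial.rootMultiplicity_eq_natTrailingDegree']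
  apply le_antisymm
  · apply Polynomial.natTrailingDegree_le_of_ne_zero
    rw [Polynomial.coeff_reflect, Polynomial.revAt_le (Nat.sub_le _ _), Nat.sub_sub_self h]
    exact mt Polynomial.leadingCoeff_eq_zero.mp hp
  · refine Polynomial.le_natTrailingDegree (fun h0 => hp (Polynomial.reflect_eq_zero_iff.mp h0))
      fun m hm => ?_
    rw [Polynomial.coeff_reflect, Polynomial.revAt_le (by omega : m ≤ D)]
    exact Polynomial.coeff_eq_zero_of_natDegree_lt (by omega)

private lemma num_denom_div (p q : Polynomial ℂ) (hq : q ≠ 0) :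
    ∃ u : Polynomial ℂ, u ≠ 0 ∧
      p = (algebraMap (Polynomial ℂ) (RatFunc ℂ) p / algebraMap (Polynomial ℂ) (RatFunc ℂ) q).num * u ∧
      q = (algebraMap (Polynomial ℂ) (RatFunc ℂ) p / algebraMap (Polynomial ℂ) (RatFunc ℂ) q).denom * u := by
  set r := algebraMap (Polynomial ℂ) (RatFunc ℂ) p / algebraMap (Polynomial ℂ) (RatFunc ℂ) q with hr
  have hq' : algebraMap (Polynomial ℂ) (RatFunc ℂ) q ≠ 0 := RatFunc.algebraMap_ne_zero hq
  have hd0 : r.denom ≠ 0 := r.denom_ne_zero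
  have hd' : algebraMap (Polynomial ℂ) (RatFunc ℂ) r.denom ≠ 0 := RatFunc.algebraMap_ne_zero hd0
  have e1 : r * algebraMap (Polynomial ℂ) (RatFunc ℂ) q = algebraMap (Polynomial ℂ) (RatFunc ℂ) p :=
    div_mul_cancel₀ _ hq'
  have e2 : r * algebraMap (Polynomial ℂ) (RatFunc ℂ) r.denom
      = algebraMap (Polynomial ℂ) (RatFunc ℂ) r.num := by
    have e2' := div_mul_cancel₀ (algebraMap (Polynomial ℂ) (RatFunc ℂ) r.num) hd'
    rwa [RatFunc.num_div_denom r] at e2'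
  have key : r.num * q = p * r.denom := by
    apply RatFunc.algebraMap_injective (K := ℂ)
    rw [map_mul, map_mul, ← e1, ← e2]
    ring
  have hdvd : r.denom ∣ q :=
    (RatFunc.isCoprime_num_denom r).symm.dvd_of_dvd_mul_left ⟨p, by rw [key]; ring⟩
  obtain ⟨u, hu⟩ := hdvd
  have hu0 : u ≠ 0 := fun h => hq (by rw [hu, h, mul_zero])
  refine ⟨u, hu0, ?_, hu⟩
  have : r.denom * (r.num * u) = r.denom * p := by
    rw [hu] at key
    linear_combination key
  exact (mul_left_cancel₀ hd0 this).symm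


private lemma flip_eq (A : RatFunc ℂ) (D : ℕ) (hn : A.num.natDegree ≤ D)
    (hd : A.denom.natDegree ≤ D) :
    flip A = algebraMap (Polynomial ℂ) (RatFunc ℂ) (Polynomial.reflect D A.num)
      / algebraMap (Polynomial ℂ) (RatFunc ℂ) (Polynomial.reflect D A.denom) := by
  rw [flip, rcomp, aeval_inv_X D hn, aeval_inv_X D hd, div_div_div_comm,
    div_self (pow_ne_zero D (RatFunc.X_ne_zero (K := ℂ))), div_one]

private lemma evalOP_coe (A : RatFunc ℂ) (z : ℂ) : evalOP A (z : OnePoint ℂ) = evalF A z := rfl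

private lemma evalOP_infty (A : RatFunc ℂ) : evalOP A ∞ = evalF (flip A) 0 := rfl

private lemma locDeg_coe (A : RatFunc ℂ) (z : ℂ) : locDeg A (z : OnePoint ℂ) = locDegF A z := rfl

private lemma locDeg_infty (A : RatFunc ℂ) : locDeg A ∞ = locDegF (flip A) 0 := rfl

private lemma main_aux (A : RatFunc ℂ) (hA : 5 ≤ rdeg A) (O₁ O₂ : Orbifold)
    (hm : IsMinHolo A O₁ O₂) (hχ : 0 ≤ O₁.eulerChar) (w : OnePoint ℂ) (hw : 1 < O₂.nu w)
    (P : Polynomial ℂ) (hP : P ≠ 0)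
    (hroot : ∀ z : ℂ, P.eval z = 0 →
      evalOP A (z : OnePoint ℂ) = w ∧ locDeg A (z : OnePoint ℂ) = Polynomial.rootMultiplicity z P)
    (hinf : P.natDegree < rdeg A → evalOP A ∞ = w ∧ locDeg A ∞ = rdeg A - P.natDegree)
    (hcon : ∀ z, evalOP A z = w → locDeg A z ≤ 1) : False := by
  have hD1 : rdeg A - 1 ≤ P.natDegree := by
    by_cases hlt : P.natDegree < rdeg A
    · obtain ⟨he, hl⟩ := hinf hlt
      have := hcon _ he
      omega
    · omega
  have hsimple : ∀ z : ℂ, Polynomial.rootMultiplicity z P ≤ 1 := by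
    intro z
    by_cases hz : P.eval z = 0
    · obtain ⟨he, hl⟩ := hroot z hz
      rw [← hl]
      exact hcon _ he
    · rw [Polynomial.rootMultiplicity_eq_zero hz]
      omega
  have hcard : P.roots.card = P.natDegree :=
    Polynomial.splits_iff_card_roots.mp (IsAlgClosed.splits P)
  have hnodup : P.roots.Nodup := Multiset.nodup_iff_count_le_one.mpr fun z => by
    rw [Polynomial.count_roots]
    exact hsimple z
  set S₀ : Finset (OnePoint ℂ) := P.roots.toFinset.image (fun z : ℂ => (z : OnePoint ℂ)) with hS₀
  have hcard₀ : S₀.card = P.natDegree := by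
    rw [hS₀, Finset.card_image_of_injective _ (OnePoint.coe_injective (X := ℂ)),
      Multiset.toFinset_card_of_nodup hnodup, hcard]
  have hS₀mem : ∀ z ∈ S₀, evalOP A z = w ∧ locDeg A z = 1 := by
    intro z hz
    rw [hS₀, Finset.mem_image] at hz
    obtain ⟨x, hx, rfl⟩ := hz
    rw [Multiset.mem_toFinset, Polynomial.mem_roots hP] at hx
    obtain ⟨he, hl⟩ := hroot x hx
    refine ⟨he, le_antisymm (hcon _ he) ?_⟩
    rw [hl]
    exact (Polynomial.rootMultiplicity_pos hP).mpr hx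
  set S : Finset (OnePoint ℂ) := if P.natDegree < rdeg A then insert ∞ S₀ else S₀ with hS
  have hSmem : ∀ z ∈ S, evalOP A z = w ∧ locDeg A z = 1 := by
    intro z hz
    rw [hS] at hz
    split_ifs at hz with hlt
    · rcases Finset.mem_insert.mp hz with rfl | hz'
      · obtain ⟨he, hl⟩ := hinf hlt
        refine ⟨he, ?_⟩
        have := hcon _ he
        omega
      · exact hS₀mem _ hz'
    · exact hS₀mem _ hz
  have hcardS : 5 ≤ S.card := by
    rw [hS]
    split_ifs with hlt
    · rw [Finset.card_insert_of_notMem (fun hmem => by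
        rw [hS₀, Finset.mem_image] at hmem
        obtain ⟨x, _, hx⟩ := hmem
        exact OnePoint.coe_ne_infty x hx), hcard₀]
      omega
    · rw [hcard₀]
      omega
  have hnu : ∀ z ∈ S, 2 ≤ O₁.nu z := by
    intro z hz
    obtain ⟨he, hl⟩ := hSmem z hz
    have hmz := hm z
    rw [he, hl, Nat.gcd_one_left, mul_one] at hmz
    omega
  have hsub : S ⊆ O₁.finite.toFinset := by
    intro z hz
    rw [Set.Finite.mem_toFinset]
    have := hnu z hz
    show O₁.nu z ≠ 1
    omega
  have hterm : ∀ z ∈ O₁.finite.toFinset, (0 : ℚ) ≤ 1 - (O₁.nu z : ℚ)⁻¹ := by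
    intro z _
    have h1 : (1 : ℚ) ≤ (O₁.nu z : ℚ) := by exact_mod_cast O₁.one_le z
    have := inv_le_one_of_one_le₀ h1
    linarith
  have hsumT : ∑ z ∈ S, (1 - (O₁.nu z : ℚ)⁻¹) ≤ ∑ z ∈ O₁.finite.toFinset, (1 - (O₁.nu z : ℚ)⁻¹) :=
    Finset.sum_le_sum_of_subset_of_nonneg hsub fun z hz _ => hterm z hz
  have hsumS : (5 : ℚ) * (1 / 2) ≤ ∑ z ∈ S, (1 - (O₁.nu z : ℚ)⁻¹) := by
    have hhalf : ∀ z ∈ S, (1 / 2 : ℚ) ≤ 1 - (O₁.nu z : ℚ)⁻¹ := by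
      intro z hz
      have h2 : (2 : ℚ) ≤ (O₁.nu z : ℚ) := by exact_mod_cast hnu z hz
      have hpos : (0 : ℚ) < 2 := by norm_num
      have := inv_anti₀ hpos h2
      norm_num at this ⊢
      linarith
    calc (5 : ℚ) * (1 / 2) ≤ (S.card : ℚ) * (1 / 2) := by
          have : (5 : ℚ) ≤ (S.card : ℚ) := by exact_mod_cast hcardS
          nlinarith
      _ = S.card • (1 / 2 : ℚ) := by rw [nsmul_eq_mul]
      _ ≤ ∑ z ∈ S, (1 - (O₁.nu z : ℚ)⁻¹) := Finset.card_nsmul_le_sum S _ _ hhalf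
  have hflipsum : ∑ z ∈ O₁.finite.toFinset, ((O₁.nu z : ℚ)⁻¹ - 1)
      = -∑ z ∈ O₁.finite.toFinset, (1 - (O₁.nu z : ℚ)⁻¹) := by
    rw [← Finset.sum_neg_distrib]
    exact Finset.sum_congr rfl fun z _ => (neg_sub _ _).symm
  have hχ' := hχ
  rw [Orbifold.eulerChar, hflipsum] at hχ'
  linarith

/-- **Lemma.** If `A` has degree at least five, `A : O₁ → O₂` is a minimal holomorphic
map between nontrivial orbifolds, and `χ(O₁) ≥ 0`, then every singular point of `O₂` is a
critical value of `A`. -/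
theorem singular_points_critical (A : RatFunc ℂ) (hA : 5 ≤ rdeg A)
    (O₁ O₂ : Orbifold) (h₁ : O₁.Good) (h₂ : O₂.Good)
    (hnt₁ : O₁.IsNontrivial) (hnt₂ : O₂.IsNontrivial)
    (hm : IsMinHolo A O₁ O₂) (hχ : 0 ≤ O₁.eulerChar) :
    ∀ w : OnePoint ℂ, 1 < O₂.nu w → ∃ z, evalOP A z = w ∧ 2 ≤ locDeg A z := by
  intro w hw
  by_contra hcon0
  push_neg at hcon0
  have hcon : ∀ z, evalOP A z = w → locDeg A z ≤ 1 := by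
    intro z hz
    have := hcon0 z hz
    omega
  have hcop := A.isCoprime_num_denom
  have hdmon := A.monic_denom
  have hd0 : A.denom ≠ 0 := A.denom_ne_zero
  have hnD : A.num.natDegree ≤ rdeg A := le_max_left _ _
  have hdD : A.denom.natDegree ≤ rdeg A := le_max_right _ _
  have hDdef : rdeg A = max A.num.natDegree A.denom.natDegree := rfl
  cases w with
  | infty =>
      -- w = ∞ ; P = denom
      refine main_aux A hA O₁ O₂ hm hχ ∞ hw A.denom hd0 ?_ ?_ hcon
      · intro z hz
        constructor
        · rw [evalOP_coe, evalF, if_pos hz]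
        · rw [locDeg_coe, locDegF, if_pos hz]
      · intro hlt
        have hnd : A.num.natDegree = rdeg A := by
          rcases le_total A.num.natDegree A.denom.natDegree with h | h
          · rw [hDdef, max_eq_right h] at hlt ⊢; omega
          · rw [hDdef, max_eq_left h]
        have hn0 : A.num ≠ 0 := by
          intro h0
          rw [h0, Polynomial.natDegree_zero] at hnd
          omega
        have hflip := flip_eq A (rdeg A) hnD hdD
        obtain ⟨u, hu0, hpu, hqu⟩ :=
          num_denom_div (Polynomial.reflect (rdeg A) A.num) (Polynomial.reflect (rdeg A) A.denom)
            (fun h => hd0 (Polynomial.reflect_eq_zero_iff.mp h))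
        rw [← hflip] at hpu hqu
        have hM0 : (Polynomial.reflect (rdeg A) A.denom).eval 0 = 0 := by
          rw [← Polynomial.coeff_zero_eq_eval_zero, Polynomial.coeff_reflect,
            Polynomial.revAt_zero]
          exact Polynomial.coeff_eq_zero_of_natDegree_lt hlt
        have hN0 : (Polynomial.reflect (rdeg A) A.num).eval 0 ≠ 0 := by
          rw [← Polynomial.coeff_zero_eq_eval_zero, Polynomial.coeff_reflect,
            Polynomial.revAt_zero, ← hnd, Polynomial.coeff_natDegree]
          exact mt Polynomial.leadingCoeff_eq_zero.mp hn0
        have hu00 : u.eval 0 ≠ 0 := by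
          intro h
          apply hN0
          rw [hpu, Polynomial.eval_mul, h, mul_zero]
        have hden0 : (flip A).denom.eval 0 = 0 := by
          have := congrArg (Polynomial.eval 0) hqu
          rw [Polynomial.eval_mul, hM0] at this
          rcases mul_eq_zero.mp this.symm with h | h
          · exact h
          · exact absurd h hu00
        constructor
        · rw [evalOP_infty, evalF, if_pos hden0]
        · rw [locDeg_infty, locDegF, if_pos hden0]
          have hMne : Polynomial.reflect (rdeg A) A.denom ≠ 0 :=
            fun h => hd0 (Polynomial.reflect_eq_zero_iff.mp h)
          have hmul : Polynomial.rootMultiplicity 0 (Polynomial.reflect (rdeg A) A.denom)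
              = Polynomial.rootMultiplicity 0 (flip A).denom
                + Polynomial.rootMultiplicity 0 u := by
            rw [hqu]
            exact Polynomial.rootMultiplicity_mul (by rw [← hqu]; exact hMne)
          rw [rm_zero_reflect hd0 hdD, Polynomial.rootMultiplicity_eq_zero hu00] at hmul
          omega
  | coe c =>
      -- w = c ; P = num - C c * denom
      set P : Polynomial ℂ := A.num - Polynomial.C c * A.denom with hPdef
      have hP : P ≠ 0 := by
        intro h0
        have hnc : A.num = Polynomial.C c * A.denom := by
          have := sub_eq_zero.mp h0
          exact this
        have hdu : IsUnit A.denom :=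
          hcop.isUnit_of_dvd' ⟨Polynomial.C c, by rw [hnc]; ring⟩ dvd_rfl
        have hdd0 : A.denom.natDegree = 0 := Polynomial.natDegree_eq_zero_of_isUnit hdu
        have hnn : A.num.natDegree ≤ 0 := by
          rw [hnc]
          calc (Polynomial.C c * A.denom).natDegree
              ≤ (Polynomial.C c).natDegree + A.denom.natDegree := Polynomial.natDegree_mul_le
            _ = 0 := by rw [Polynomial.natDegree_C, hdd0]
        have : rdeg A ≤ 0 := by
          rw [hDdef]
          exact max_le hnn (le_of_eq hdd0)
        omega
      have hPD : P.natDegree ≤ rdeg A := by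
        rw [hPdef]
        calc (A.num - Polynomial.C c * A.denom).natDegree
            ≤ max A.num.natDegree (Polynomial.C c * A.denom).natDegree :=
              Polynomial.natDegree_sub_le _ _
          _ ≤ max A.num.natDegree ((Polynomial.C c).natDegree + A.denom.natDegree) :=
              max_le_max le_rfl Polynomial.natDegree_mul_le
          _ ≤ rdeg A := by rw [Polynomial.natDegree_C, zero_add]; exact max_le hnD hdD
      refine main_aux A hA O₁ O₂ hm hχ (c : OnePoint ℂ) hw P hP ?_ ?_ hcon
      · intro z hz
        rw [hPdef] at hz
        simp only [Polynomial.eval_sub, Polynomial.eval_mul, Polynomial.eval_C] at hz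
        have hz' : A.num.eval z = c * A.denom.eval z := by linear_combination hz
        have hdz : A.denom.eval z ≠ 0 := by
          intro h
          have hnz : A.num.eval z = 0 := by rw [hz', h, mul_zero]
          exact coprime_eval hcop z hnz h
        have hval : A.num.eval z / A.denom.eval z = c := by
          rw [div_eq_iff hdz, hz']
        constructor
        · rw [evalOP_coe, evalF, if_neg hdz, hval]
        · rw [locDeg_coe, locDegF, if_neg hdz, hval]
      · intro hlt
        have hdd : A.denom.natDegree = rdeg A := by
          by_contra hne
          have hddlt : A.denom.natDegree < rdeg A := lt_of_le_of_ne hdD hne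
          have hnd : A.num.natDegree = rdeg A := by
            rcases le_total A.num.natDegree A.denom.natDegree with h | h
            · rw [hDdef, max_eq_right h] at hddlt ⊢; omega
            · rw [hDdef, max_eq_left h]
          have hcoeff : P.coeff (rdeg A) ≠ 0 := by
            rw [hPdef, Polynomial.coeff_sub, Polynomial.coeff_C_mul,
              Polynomial.coeff_eq_zero_of_natDegree_lt hddlt, mul_zero, sub_zero, ← hnd,
              Polynomial.coeff_natDegree]
            refine mt Polynomial.leadingCoeff_eq_zero.mp ?_
            intro h0
            rw [h0, Polynomial.natDegree_zero] at hnd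
            omega
          exact absurd (Polynomial.le_natDegree_of_ne_zero hcoeff) (by omega)
        have hcD : A.num.coeff (rdeg A) = c := by
          have h0 : P.coeff (rdeg A) = 0 := Polynomial.coeff_eq_zero_of_natDegree_lt hlt
          rw [hPdef, Polynomial.coeff_sub, Polynomial.coeff_C_mul, ← hdd,
            Polynomial.coeff_natDegree, hdmon.leadingCoeff, mul_one, sub_eq_zero] at h0
          rw [← hdd, h0]
        have hflip := flip_eq A (rdeg A) hnD hdD
        obtain ⟨u, hu0, hpu, hqu⟩ :=
          num_denom_div (Polynomial.reflect (rdeg A) A.num) (Polynomial.reflect (rdeg A) A.denom)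
            (fun h => hd0 (Polynomial.reflect_eq_zero_iff.mp h))
        rw [← hflip] at hpu hqu
        have hM0 : (Polynomial.reflect (rdeg A) A.denom).eval 0 = 1 := by
          rw [← Polynomial.coeff_zero_eq_eval_zero, Polynomial.coeff_reflect,
            Polynomial.revAt_zero, ← hdd, Polynomial.coeff_natDegree, hdmon.leadingCoeff]
        have hN0 : (Polynomial.reflect (rdeg A) A.num).eval 0 = c := by
          rw [← Polynomial.coeff_zero_eq_eval_zero, Polynomial.coeff_reflect,
            Polynomial.revAt_zero, hcD]
        have hu00 : u.eval 0 ≠ 0 := by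
          intro h
          have := congrArg (Polynomial.eval 0) hqu
          rw [Polynomial.eval_mul, hM0, h, mul_zero] at this
          exact one_ne_zero this
        have hden0 : (flip A).denom.eval 0 ≠ 0 := by
          intro h
          have := congrArg (Polynomial.eval 0) hqu
          rw [Polynomial.eval_mul, hM0, h, zero_mul] at this
          exact one_ne_zero this
        have hval : (flip A).num.eval 0 / (flip A).denom.eval 0 = c := by
          have h1 : (flip A).num.eval 0 * u.eval 0 / ((flip A).denom.eval 0 * u.eval 0)
              = (flip A).num.eval 0 / (flip A).denom.eval 0 :=
            mul_div_mul_right _ _ hu00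
          rw [← h1, ← Polynomial.eval_mul, ← Polynomial.eval_mul, ← hpu, ← hqu, hN0, hM0, div_one]
        constructor
        · rw [evalOP_infty, evalF, if_neg hden0, hval]
        · rw [locDeg_infty, locDegF, if_neg hden0, hval]
          have hrefl : Polynomial.reflect (rdeg A) P
              = ((flip A).num - Polynomial.C c * (flip A).denom) * u := by
            rw [hPdef, Polynomial.reflect_sub, Polynomial.reflect_C_mul, hpu, hqu]
            ring
          have hprod : ((flip A).num - Polynomial.C c * (flip A).denom) * u ≠ 0 := by
            rw [← hrefl]
            exact fun h => hP (Polynomial.reflect_eq_zero_iff.mp h)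
          have := rm_zero_reflect hP hPD
          rw [hrefl, Polynomial.rootMultiplicity_mul hprod,
            Polynomial.rootMultiplicity_eq_zero hu00, add_zero] at this
          rw [this]


end GenLattes
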